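/- Under the same assumptions, with Â_p⁺ = (Â_pᵀÂ_p)⁻¹Â_pᵀ, we have ‖Â⁺ − Â_p⁺‖₂ ≤ ‖Â⁺‖₂·‖I − Â⁺ÎÂ‖₂/(1 − ‖I − Â⁺ÎÂ‖₂) + ‖Â⁺‖₂²·‖ÎÂ − Â‖₂. -/

import Mathlib

open Matrix
open scoped Matrix.Norms.L2Operator

/-!
Write `B = Â⁺ÎÂ = (ÂᵀÂ)⁻¹ÂᵀÎÂ`. Since `Î` is symmetric and idempotent, `(ÎÂ)ᵀ(ÎÂ) = ÂᵀÎÂ`, hence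
`Â_p⁺ = B⁻¹Â⁺Î` and
  `Â⁺ − Â_p⁺ = Â⁺(I − Î) + (I − B⁻¹)Â⁺Î`.
The first term is `(ÂᵀÂ)⁻¹(Â − ÎÂ)ᵀ = Â⁺Â⁺ᵀ(Â − ÎÂ)ᵀ`, of norm at most `‖Â⁺‖²‖ÎÂ − Â‖`.
In the second, `‖Î‖ ≤ 1` (an orthogonal projection), and `‖I − B‖ < 1` makes `B` invertible with
`‖I − B⁻¹‖ ≤ ‖B⁻¹‖‖I − B‖ ≤ (1 + ‖I − B⁻¹‖)‖I − B‖`, i.e. `‖I − B⁻¹‖ ≤ r / (1 − r)` for `r = ‖I − B‖`.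
-/

theorem norm_one_sub_inverse_le {R : Type*} [NormedRing R] [HasSummableGeomSeries R]
    (h1 : ‖(1 : R)‖ ≤ 1) {x : R} (hx : ‖1 - x‖ < 1) :
    ‖1 - Ring.inverse x‖ ≤ ‖1 - x‖ / (1 - ‖1 - x‖) := by
  obtain ⟨u, rfl⟩ : IsUnit x := sub_sub_self 1 x ▸ (Units.oneSub (1 - x) hx).isUnit
  rw [Ring.inverse_unit, le_div_iff₀ (by linarith)]
  have hinv : ‖(↑u⁻¹ : R)‖ ≤ 1 + ‖1 - (↑u⁻¹ : R)‖ :=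
    calc ‖(↑u⁻¹ : R)‖ = ‖1 - (1 - (↑u⁻¹ : R))‖ := by rw [sub_sub_cancel]
      _ ≤ ‖(1 : R)‖ + ‖1 - (↑u⁻¹ : R)‖ := norm_sub_le _ _
      _ ≤ 1 + ‖1 - (↑u⁻¹ : R)‖ := by gcongr
  have hfactor : ‖1 - (↑u⁻¹ : R)‖ ≤ ‖(↑u⁻¹ : R)‖ * ‖1 - (u : R)‖ :=
    calc ‖1 - (↑u⁻¹ : R)‖ = ‖(↑u⁻¹ : R) * -(1 - (u : R))‖ := by simp [mul_sub]
      _ ≤ ‖(↑u⁻¹ : R)‖ * ‖1 - (u : R)‖ := by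
        rw [← norm_neg (1 - (u : R))]; exact norm_mul_le _ _
  nlinarith [norm_nonneg (1 - (u : R))]

namespace Matrix

theorem isUnit_of_rank_eq_card {n K : Type*} [Fintype n] [DecidableEq n] [Field K]
    {M : Matrix n n K} (h : M.rank = Fintype.card n) : IsUnit M := by
  rw [← mulVec_surjective_iff_isUnit, ← Matrix.coe_mulVecLin, ← LinearMap.range_eq_top]
  apply Submodule.eq_top_of_finrank_eq
  rw [← Matrix.rank, h, Module.finrank_fintype_fun_eq_card]

variable {m n : Type*} [Fintype m] [Fintype n]

section CommRing

variable [DecidableEq n] {R : Type*} [CommRing R]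

noncomputable def leftPinv (A : Matrix m n R) : Matrix n m R := (Aᵀ * A)⁻¹ * Aᵀ

theorem leftPinv_mul_transpose_leftPinv {A : Matrix m n R} (hA : IsUnit (Aᵀ * A).det) :
    A.leftPinv * A.leftPinvᵀ = (Aᵀ * A)⁻¹ := by
  rw [leftPinv, transpose_mul, transpose_nonsing_inv, transpose_mul, transpose_transpose,
    Matrix.mul_assoc, ← Matrix.mul_assoc Aᵀ, mul_nonsing_inv _ hA, Matrix.mul_one]

theorem leftPinv_mul_one_sub [DecidableEq m] {A : Matrix m n R} {P : Matrix m m R}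
    (hP : Pᵀ = P) :
    A.leftPinv * (1 - P) = (Aᵀ * A)⁻¹ * (A - P * A)ᵀ := by
  rw [leftPinv, transpose_sub, transpose_mul, hP]
  simp only [Matrix.mul_sub, Matrix.mul_one, Matrix.mul_assoc]

theorem leftPinv_mul_left [DecidableEq m] {A : Matrix m n R} {P : Matrix m m R} (hP : Pᵀ = P)
    (hPP : P * P = P) (hA : IsUnit (Aᵀ * A).det) :
    (P * A).leftPinv = (A.leftPinv * P * A)⁻¹ * (A.leftPinv * P) := by
  have hPA : (P * A)ᵀ = Aᵀ * P := by rw [transpose_mul, hP]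
  have hB : A.leftPinv * P * A = (Aᵀ * A)⁻¹ * (Aᵀ * P * A) := by
    simp only [leftPinv, Matrix.mul_assoc]
  have hgramPA : (P * A)ᵀ * (P * A) = Aᵀ * P * A := by
    rw [hPA, Matrix.mul_assoc Aᵀ, ← Matrix.mul_assoc P, hPP, Matrix.mul_assoc]
  rw [hB, mul_inv_rev, nonsing_inv_nonsing_inv _ hA, leftPinv, leftPinv, hgramPA, hPA,
    Matrix.mul_assoc _ (Aᵀ * A), Matrix.mul_assoc (Aᵀ * A)⁻¹,
    mul_nonsing_inv_cancel_left _ _ hA]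

end CommRing

theorem l2_opNorm_transpose [DecidableEq m] [DecidableEq n] (A : Matrix m n ℝ) :
    ‖Aᵀ‖ = ‖A‖ := by
  rw [← conjTranspose_eq_transpose_of_trivial, l2_opNorm_conjTranspose]

theorem isStarProjection_of_transpose_eq {P : Matrix m m ℝ} (hP : Pᵀ = P)
    (hPP : P * P = P) : IsStarProjection P :=
  ⟨hPP, by rw [IsSelfAdjoint, star_eq_conjTranspose, conjTranspose_eq_transpose_of_trivial, hP]⟩

theorem norm_leftPinv_mul_one_sub_le [DecidableEq m] [DecidableEq n] {A : Matrix m n ℝ}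
    {P : Matrix m m ℝ} (hP : Pᵀ = P) (hA : IsUnit (Aᵀ * A).det) :
    ‖A.leftPinv * (1 - P)‖ ≤ ‖A.leftPinv‖ ^ 2 * ‖P * A - A‖ :=
  calc ‖A.leftPinv * (1 - P)‖ = ‖A.leftPinv * A.leftPinvᵀ * (A - P * A)ᵀ‖ := by
        rw [leftPinv_mul_one_sub hP, leftPinv_mul_transpose_leftPinv hA]
    _ ≤ ‖A.leftPinv‖ * ‖A.leftPinvᵀ‖ * ‖(A - P * A)ᵀ‖ :=
        (l2_opNorm_mul _ _).trans (by gcongr; exact l2_opNorm_mul _ _)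
    _ = ‖A.leftPinv‖ ^ 2 * ‖P * A - A‖ := by
        rw [l2_opNorm_transpose, l2_opNorm_transpose, norm_sub_rev]; ring

end Matrix

theorem lemma_bound_pseudoinverse_difference_general
    (n m : ℕ) (A : Matrix (Fin n) (Fin m) ℝ) (Ihat : Matrix (Fin n) (Fin n) ℝ)
    (hArank : A.rank = m) (hsym : Ihatᵀ = Ihat) (hidem : Ihat * Ihat = Ihat) :
    let Ap : Matrix (Fin m) (Fin n) ℝ := (Aᵀ * A)⁻¹ * Aᵀ
    let App : Matrix (Fin n) (Fin m) ℝ := Ihat * A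
    let Appp : Matrix (Fin m) (Fin n) ℝ := (Appᵀ * App)⁻¹ * Appᵀ
    ‖(1 : Matrix (Fin m) (Fin m) ℝ) - Ap * Ihat * A‖ < 1 →
      ‖Ap - Appp‖ ≤
        ‖Ap‖ * ‖(1 : Matrix (Fin m) (Fin m) ℝ) - Ap * Ihat * A‖ /
          (1 - ‖(1 : Matrix (Fin m) (Fin m) ℝ) - Ap * Ihat * A‖) +
        ‖Ap‖ ^ 2 * ‖Ihat * A - A‖ := by
  intro Ap App Appp hlt
  set r := ‖(1 : Matrix (Fin m) (Fin m) ℝ) - Ap * Ihat * A‖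
  have hA : IsUnit (Aᵀ * A).det := by
    rw [← isUnit_iff_isUnit_det]
    exact isUnit_of_rank_eq_card (by rw [rank_transpose_mul_self, hArank, Fintype.card_fin])
  have hAppp : Appp = (Ap * Ihat * A)⁻¹ * (Ap * Ihat) := leftPinv_mul_left hsym hidem hA
  have hinv : ‖1 - (Ap * Ihat * A)⁻¹‖ ≤ r / (1 - r) := by
    rw [nonsing_inv_eq_ringInverse]
    exact norm_one_sub_inverse_le (IsStarProjection.one _).norm_le hlt
  have hIhat : ‖Ihat‖ ≤ 1 := (isStarProjection_of_transpose_eq hsym hidem).norm_le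
  calc ‖Ap - Appp‖ = ‖Ap * (1 - Ihat) + (1 - (Ap * Ihat * A)⁻¹) * (Ap * Ihat)‖ := by
        rw [hAppp, Matrix.mul_sub, Matrix.sub_mul, Matrix.mul_one, Matrix.one_mul,
          sub_add_sub_cancel]
    _ ≤ ‖Ap * (1 - Ihat)‖ + ‖1 - (Ap * Ihat * A)⁻¹‖ * (‖Ap‖ * ‖Ihat‖) :=
        norm_add_le_of_le le_rfl ((l2_opNorm_mul _ _).trans (by gcongr; exact l2_opNorm_mul _ _))
    _ ≤ ‖Ap‖ ^ 2 * ‖Ihat * A - A‖ + r / (1 - r) * (‖Ap‖ * 1) := by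
        gcongr
        exact norm_leftPinv_mul_one_sub_le hsym hA
    _ = _ := by ring

/-- Spectral-norm bound
`‖Â⁺ − Â_p⁺‖ ≤ ‖Â⁺‖·‖I − Â⁺ÎÂ‖/(1 − ‖I − Â⁺ÎÂ‖) + ‖Â⁺‖²·‖ÎÂ − Â‖`. -/
theorem lemma_bound_pseudoinverse_difference
    (n m : ℕ) (A : Matrix (Fin n) (Fin m) ℝ) (Ihat : Matrix (Fin n) (Fin n) ℝ)
    (hArank : A.rank = m) (hsym : Ihatᵀ = Ihat) (hidem : Ihat * Ihat = Ihat)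
    (hinv : IsUnit (Aᵀ * Ihat * A)) :
    let Ap : Matrix (Fin m) (Fin n) ℝ := (Aᵀ * A)⁻¹ * Aᵀ
    let App : Matrix (Fin n) (Fin m) ℝ := Ihat * A
    let Appp : Matrix (Fin m) (Fin n) ℝ := (Appᵀ * App)⁻¹ * Appᵀ
    ‖(1 : Matrix (Fin m) (Fin m) ℝ) - Ap * Ihat * A‖ < 1 →
      ‖Ap - Appp‖ ≤
        ‖Ap‖ * ‖(1 : Matrix (Fin m) (Fin m) ℝ) - Ap * Ihat * A‖ /
          (1 - ‖(1 : Matrix (Fin m) (Fin m) ℝ) - Ap * Ihat * A‖) +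
        ‖Ap‖ ^ 2 * ‖Ihat * A - A‖ :=
  lemma_bound_pseudoinverse_difference_general n m A Ihat hArank hsym hidem
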